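/- arXiv:2604.22284 — 2 statements merged into one kernel-verified Lean document; each statement's English description precedes it below -/
import Mathlib

section
/- Two-subspace lemma: Let N₁, N₂ be closed subspaces of a Hilbert space H with orthogonal projections P₁, P₂. Then P₁P₂ is compact if and only if N₁ + N₂ is closed and P_{N₁+N₂} - (P₁ + P₂) is compact. -/
open ContinuousLinearMap Submodule

noncomputable section

/-- The orthogonal projection onto (the topological closure of) a submodule `K` of a Hilbert
space, viewed as an operator on the whole space. -/
def projCLM {H : Type*} [NormedAddCommGroup H] [InnerProductSpace ℂ H] [CompleteSpace H]
    (K : Submodule ℂ H) : H →L[ℂ] H :=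
  haveI : CompleteSpace K.topologicalClosure :=
    K.isClosed_topologicalClosure.completeSpace_coe
  K.topologicalClosure.subtypeL ∘L orthogonalProjection K.topologicalClosure

/-!
Write `P`, `P₁`, `P₂` for the projections onto `N₁ + N₂`, `N₁`, `N₂`. Suppose `P₁P₂` is compact,
so that `P₂P₁ = (P₁P₂)*` is compact as well. Let `L = N₂ ⊖ (N₁ ∩ N₂)`, so `N₁ + N₂ = N₁ + L` and
`N₁ ∩ L = 0`. The compact operator `P₁P_L` has no nonzero fixed vector, so by the Fredholm
alternative `‖b‖ ≤ C ‖b - P₁b‖ ≤ C ‖a + b‖` for `a ∈ N₁`, `b ∈ L`: the two subspaces are at a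
positive angle, and their sum is closed. The open mapping theorem then writes `Px = a + b` with `a ∈ N₁`, `b ∈ N₂`
of norm `O(‖x‖)`, and `(P - P₁ - P₂) x = -(P₂P₁a + P₁P₂b)` shows that `P - P₁ - P₂` is compact.
Conversely `(P - P₁ - P₂) P₂ = -P₁P₂`.
-/

section Normed

variable {𝕜 E F G : Type*} [NontriviallyNormedField 𝕜] [NormedAddCommGroup E] [NormedSpace 𝕜 E]
  [NormedAddCommGroup F] [NormedSpace 𝕜 F] [NormedAddCommGroup G] [NormedSpace 𝕜 G]

theorem isClosed_sup_of_norm_le_mul_norm_add {U L : Submodule 𝕜 E} [CompleteSpace U]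
    [CompleteSpace L] {C : NNReal} (h : ∀ a ∈ U, ∀ b ∈ L, ‖b‖ ≤ C * ‖a + b‖) :
    IsClosed ((U ⊔ L : Submodule 𝕜 E) : Set E) := by
  let Φ : U × L →L[𝕜] E := U.subtypeL.coprod L.subtypeL
  have hΦ : AntilipschitzWith (1 + C) Φ := Φ.antilipschitz_of_bound fun ⟨a, b⟩ => by
    have hb : ‖b‖ ≤ C * ‖Φ (a, b)‖ := h a a.2 b b.2
    have ha : ‖a‖ ≤ ‖Φ (a, b)‖ + ‖b‖ := by simpa [Φ] using norm_sub_le (a + b : E) b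
    rw [Prod.norm_mk, NNReal.coe_add, NNReal.coe_one]
    exact max_le (by linarith) (by nlinarith [norm_nonneg (Φ (a, b))])
  have hrange : Set.range Φ = ((U ⊔ L : Submodule 𝕜 E) : Set E) := by
    ext w
    refine ⟨?_, fun hw => ?_⟩
    · rintro ⟨⟨a, b⟩, rfl⟩
      exact add_mem (mem_sup_left a.2) (mem_sup_right b.2)
    · obtain ⟨a, ha, b, hb, rfl⟩ := mem_sup.1 hw
      exact ⟨(⟨a, ha⟩, ⟨b, hb⟩), rfl⟩
  exact hrange ▸ hΦ.isClosed_range Φ.uniformContinuous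

theorem IsCompactOperator.of_norm_sq_le [CompleteSpace F] {T : E →L[𝕜] F} {S : E →L[𝕜] G}
    (hS : IsCompactOperator S) (h : ∀ x, ‖T x‖ ^ 2 ≤ ‖S x‖ * ‖x‖) : IsCompactOperator T := by
  refine (isCompactOperator_iff_isCompact_closure_image_closedBall (T : E →ₗ[𝕜] F) one_pos).2 <|
    TotallyBounded.isCompact_of_isClosed ?_ isClosed_closure
  refine TotallyBounded.closure <| Metric.totallyBounded_iff.2 fun ε hε => ?_
  have hSB : TotallyBounded (S '' Metric.closedBall 0 1) :=
    (hS.isCompact_closure_image_closedBall 1).totallyBounded.subset subset_closure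
  obtain ⟨t, htB, htfin, hcover⟩ := Set.exists_subset_image_finite_and.1 <|
    Metric.finite_approx_of_totallyBounded hSB (ε ^ 2 / 4) (by positivity)
  refine ⟨T '' t, htfin.image T, ?_⟩
  rintro _ ⟨x, hx, rfl⟩
  obtain ⟨_, ⟨y, hy, rfl⟩, hSxy⟩ := Set.mem_iUnion₂.1 (hcover ⟨x, hx, rfl⟩)
  refine Set.mem_iUnion₂.2 ⟨T y, ⟨y, hy, rfl⟩, ?_⟩
  rw [Metric.mem_ball, dist_eq_norm] at hSxy ⊢
  have hxy : ‖x - y‖ ≤ 2 := by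
    have hy' := htB hy
    simp only [Metric.mem_closedBall, dist_zero_right] at hx hy'
    linarith [norm_sub_le x y]
  refine lt_of_pow_lt_pow_left₀ 2 hε.le ?_
  calc ‖T x - T y‖ ^ 2 ≤ ‖S x - S y‖ * ‖x - y‖ := by simpa only [map_sub] using h (x - y)
    _ ≤ ε ^ 2 / 4 * 2 := by gcongr
    _ < ε ^ 2 := by linarith [pow_pos hε 2]

end Normed

section InnerProduct

variable {𝕜 E F : Type*} [RCLike 𝕜] [NormedAddCommGroup E] [InnerProductSpace 𝕜 E]
  [NormedAddCommGroup F] [InnerProductSpace 𝕜 F]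

theorem Submodule.isClosed_of_hasOrthogonalProjection (K : Submodule 𝕜 E)
    [K.HasOrthogonalProjection] : IsClosed (K : Set E) := by
  simpa only [K.orthogonal_orthogonal] using Kᗮ.isClosed_orthogonal

variable {U V : Submodule 𝕜 E} [U.HasOrthogonalProjection] [V.HasOrthogonalProjection]

theorem exists_norm_le_mul_norm_sub_starProjection {L : Submodule 𝕜 E}
    [L.HasOrthogonalProjection] (h : IsCompactOperator (U.starProjection ∘L V.starProjection))
    (hLV : L ≤ V) (hUL : Disjoint U L) :
    ∃ C : NNReal, ∀ b ∈ L, ‖b‖ ≤ C * ‖b - U.starProjection b‖ := by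
  set T := U.starProjection ∘L L.starProjection
  have hT : IsCompactOperator T := by
    have hVL : V.starProjection ∘L L.starProjection = L.starProjection := by
      ext x
      exact starProjection_eq_self_iff.2 (hLV (starProjection_apply_mem L x))
    have := h.comp_clm L.starProjection
    rwa [← coe_comp, comp_assoc, hVL] at this
  have hT₁ : ¬ Module.End.HasEigenvalue (T : E →ₗ[𝕜] E) 1 := by
    intro hev
    obtain ⟨x, hx⟩ := hev.exists_hasEigenvector
    have hTx : U.starProjection (L.starProjection x) = x := by simpa [T] using hx.apply_eq_smul
    have hU : L.starProjection x ∈ U := by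
      rw [mem_iff_norm_starProjection, hTx]
      refine le_antisymm ?_ (norm_starProjection_apply_le L x)
      conv_lhs => rw [← hTx]
      exact norm_starProjection_apply_le U _
    have h0 : L.starProjection x = 0 :=
      disjoint_def.1 hUL _ hU (starProjection_apply_mem L x)
    exact hx.2 (by rw [← hTx, h0, map_zero])
  obtain ⟨C, hC⟩ := hT.antilipschitz_of_not_hasEigenvalue one_ne_zero hT₁
  refine ⟨C, fun b hb => ?_⟩
  have hTb : (T - (1 : 𝕜) • 1) b = -(b - U.starProjection b) := by
    simp [T, starProjection_eq_self_iff.2 hb]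
  rw [← norm_neg (b - _), ← hTb]
  exact (T - (1 : 𝕜) • 1).bound_of_antilipschitz hC b

theorem starProjection_sup_sub_add_apply [(U ⊔ V).HasOrthogonalProjection] {x a b : E}
    (ha : a ∈ U) (hb : b ∈ V) (hx : (U ⊔ V).starProjection x = a + b) :
    ((U ⊔ V).starProjection - (U.starProjection + V.starProjection)) x =
      -(V.starProjection a + U.starProjection b) := by
  have hUx : U.starProjection x = a + U.starProjection b := by
    rw [← DFunLike.congr_fun
        (starProjection_comp_starProjection_of_le (le_sup_left : U ≤ U ⊔ V)) x,
      comp_apply, hx, map_add, starProjection_eq_self_iff.2 ha]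
  have hVx : V.starProjection x = V.starProjection a + b := by
    rw [← DFunLike.congr_fun
        (starProjection_comp_starProjection_of_le (le_sup_right : V ≤ U ⊔ V)) x,
      comp_apply, hx, map_add, starProjection_eq_self_iff.2 hb]
  rw [sub_apply, add_apply, hx, hUx, hVx]
  abel

theorem starProjection_sup_sub_add_comp [(U ⊔ V).HasOrthogonalProjection] :
    ((U ⊔ V).starProjection - (U.starProjection + V.starProjection)) ∘L V.starProjection =
      -(U.starProjection ∘L V.starProjection) := by
  ext x
  have hx : (U ⊔ V).starProjection (V.starProjection x) = 0 + V.starProjection x := by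
    rw [zero_add, starProjection_eq_self_iff]
    exact mem_sup_right (starProjection_apply_mem V x)
  rw [comp_apply, starProjection_sup_sub_add_apply (zero_mem U) (starProjection_apply_mem V x) hx]
  simp

variable [CompleteSpace E] [CompleteSpace F]

theorem IsCompactOperator.adjoint {A : E →L[𝕜] F} (hA : IsCompactOperator A) :
    IsCompactOperator (ContinuousLinearMap.adjoint A) := by
  refine IsCompactOperator.of_norm_sq_le (S := A ∘L ContinuousLinearMap.adjoint A)
    (hA.comp_clm _) fun y => ?_
  rw [← inner_self_eq_norm_sq (𝕜 := 𝕜), adjoint_inner_right]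
  exact re_inner_le_norm _ _

theorem Submodule.completeSpace_of_hasOrthogonalProjection (K : Submodule 𝕜 E)
    [K.HasOrthogonalProjection] : CompleteSpace K :=
  K.isClosed_of_hasOrthogonalProjection.completeSpace_coe

theorem isClosed_sup_of_isCompactOperator_starProjection_comp
    (h : IsCompactOperator (U.starProjection ∘L V.starProjection)) :
    IsClosed ((U ⊔ V : Submodule 𝕜 E) : Set E) := by
  have := U.completeSpace_of_hasOrthogonalProjection
  have : CompleteSpace (U ⊓ V : Submodule 𝕜 E) :=
    (U.isClosed_of_hasOrthogonalProjection.inter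
      V.isClosed_of_hasOrthogonalProjection).completeSpace_coe
  have : CompleteSpace ((U ⊓ V)ᗮ ⊓ V : Submodule 𝕜 E) :=
    ((U ⊓ V).isClosed_orthogonal.inter V.isClosed_of_hasOrthogonalProjection).completeSpace_coe
  have hUL : Disjoint U ((U ⊓ V)ᗮ ⊓ V) := disjoint_iff.2 <| by
    rw [← (U ⊓ V).inf_orthogonal_eq_bot]; ac_rfl
  have hsup : U ⊔ V = U ⊔ (U ⊓ V)ᗮ ⊓ V := by
    conv_lhs => rw [← sup_orthogonal_inf_of_hasOrthogonalProjection (inf_le_right : U ⊓ V ≤ V)]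
    rw [← sup_assoc, sup_inf_self]
  obtain ⟨C, hC⟩ := exists_norm_le_mul_norm_sub_starProjection h inf_le_right hUL
  rw [hsup]
  refine isClosed_sup_of_norm_le_mul_norm_add (C := C) fun a ha b hb => (hC b hb).trans ?_
  have : b - U.starProjection b = Uᗮ.starProjection (a + b) := by
    simp [starProjection_orthogonal, starProjection_eq_self_iff.2 ha]
  rw [this]
  gcongr
  exact norm_starProjection_apply_le _ _

theorem isCompactOperator_starProjection_sup_sub_add [(U ⊔ V).HasOrthogonalProjection]
    (h : IsCompactOperator (U.starProjection ∘L V.starProjection)) :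
    IsCompactOperator ((U ⊔ V).starProjection - (U.starProjection + V.starProjection)) := by
  have := U.completeSpace_of_hasOrthogonalProjection
  have := V.completeSpace_of_hasOrthogonalProjection
  have := (U ⊔ V).completeSpace_of_hasOrthogonalProjection
  have h' : IsCompactOperator (V.starProjection ∘L U.starProjection) := by
    simpa only [adjoint_comp, (isSelfAdjoint_starProjection _).adjoint_eq] using h.adjoint
  let Φ : U × V →L[𝕜] (U ⊔ V : Submodule 𝕜 E) := (U.subtypeL.coprod V.subtypeL).codRestrict _
    fun p => add_mem (mem_sup_left p.1.2) (mem_sup_right p.2.2)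
  have hΦ : Function.Surjective Φ := by
    rintro ⟨w, hw⟩
    obtain ⟨a, ha, b, hb, rfl⟩ := mem_sup.1 hw
    exact ⟨(⟨a, ha⟩, ⟨b, hb⟩), rfl⟩
  obtain ⟨C, hC₀, hC⟩ := Φ.exists_preimage_norm_le hΦ
  obtain ⟨K₁, hK₁, hK₁C⟩ := h'.image_closedBall_subset_compact C
  obtain ⟨K₂, hK₂, hK₂C⟩ := h.image_closedBall_subset_compact C
  refine (isCompactOperator_iff_image_closedBall_subset_compact (_ : E →ₗ[𝕜] E) one_pos).2
    ⟨(fun p => -(p.1 + p.2)) '' K₁ ×ˢ K₂, (hK₁.prod hK₂).image (by fun_prop), ?_⟩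
  rintro _ ⟨x, hx, rfl⟩
  obtain ⟨⟨a, b⟩, hab, hnorm⟩ := hC ⟨_, starProjection_apply_mem (U ⊔ V) x⟩
  have hPx : (U ⊔ V).starProjection x = a + b := (congrArg Subtype.val hab).symm
  have habC : ‖(a, b)‖ ≤ C := calc
    ‖(a, b)‖ ≤ C * ‖(U ⊔ V).starProjection x‖ := hnorm
    _ ≤ C * 1 := by
      gcongr
      exact (norm_starProjection_apply_le _ x).trans (mem_closedBall_zero_iff.1 hx)
    _ = C := mul_one C
  refine ⟨(V.starProjection (U.starProjection a), U.starProjection (V.starProjection b)),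
    ⟨hK₁C ⟨a, ?_, rfl⟩, hK₂C ⟨b, ?_, rfl⟩⟩, ?_⟩
  · exact mem_closedBall_zero_iff.2 ((norm_fst_le (a, b)).trans habC)
  · exact mem_closedBall_zero_iff.2 ((norm_snd_le (a, b)).trans habC)
  · show _ = ((U ⊔ V).starProjection - (U.starProjection + V.starProjection)) x
    rw [starProjection_sup_sub_add_apply a.2 b.2 hPx, starProjection_eq_self_iff.2 a.2,
      starProjection_eq_self_iff.2 b.2]

end InnerProduct

theorem projCLM_of_isClosed {H : Type*} [NormedAddCommGroup H] [InnerProductSpace ℂ H]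
    [CompleteSpace H] {K : Submodule ℂ H} (hK : IsClosed (K : Set H)) [K.HasOrthogonalProjection] :
    projCLM K = K.starProjection := by
  have := K.isClosed_topologicalClosure.completeSpace_coe
  change K.topologicalClosure.starProjection = _
  simp_rw [hK.submodule_topologicalClosure_eq]

/-- **two-subspace lemma.** Let `N₁`, `N₂` be closed subspaces of a Hilbert space
`H` with orthogonal projections `P₁`, `P₂`. Then `P₁ P₂` is compact if and only if `N₁ + N₂` is
closed and `P_{N₁+N₂} - (P₁ + P₂)` is compact. -/
theorem product_of_projections_compact_iff
    {H : Type*} [NormedAddCommGroup H] [InnerProductSpace ℂ H] [CompleteSpace H]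
    (N₁ N₂ : Submodule ℂ H) (h₁ : IsClosed (N₁ : Set H)) (h₂ : IsClosed (N₂ : Set H)) :
    IsCompactOperator ⇑(projCLM N₁ * projCLM N₂) ↔
      (IsClosed ((N₁ ⊔ N₂ : Submodule ℂ H) : Set H) ∧
        IsCompactOperator ⇑(projCLM (N₁ ⊔ N₂) - (projCLM N₁ + projCLM N₂))) := by
  have := h₁.completeSpace_coe
  have := h₂.completeSpace_coe
  rw [projCLM_of_isClosed h₁, projCLM_of_isClosed h₂, ContinuousLinearMap.mul_def]
  constructor
  · intro h
    have hsup := isClosed_sup_of_isCompactOperator_starProjection_comp h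
    have := hsup.completeSpace_coe
    rw [projCLM_of_isClosed hsup]
    exact ⟨hsup, isCompactOperator_starProjection_sup_sub_add h⟩
  · rintro ⟨hsup, hD⟩
    have := hsup.completeSpace_coe
    rw [projCLM_of_isClosed hsup] at hD
    have := (hD.comp_clm N₂.starProjection).neg
    rw [← coe_comp, starProjection_sup_sub_add_comp] at this
    simpa using this
end
end

section
/- Let T = (T₁, T₂) be a pair of commuting isometries on a Hilbert space H, and define the defect operator Δ_T = I - T₁T₁* - T₂T₂* + T₁T₂ T₂*T₁*. If Δ_T is compact, then the commutator [T₁*, T₂] = T₁*T₂ - T₂T₁* is compact. -/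
open ContinuousLinearMap

open Metric Set in
/-- If `S*S` is compact then `S` is compact. -/
lemma compact_of_adjoint_mul_self_compact {H : Type*} [NormedAddCommGroup H]
    [InnerProductSpace ℂ H] [CompleteSpace H] (S : H →L[ℂ] H)
    (h : IsCompactOperator ⇑(adjoint S * S)) : IsCompactOperator ⇑S := by
  have key : ∀ u v : H, ‖S u - S v‖ ^ 2 ≤ ‖(adjoint S * S) u - (adjoint S * S) v‖ * ‖u - v‖ := by
    intro u v
    have h1 : RCLike.re (inner ℂ ((adjoint S * S) (u - v)) (u - v) : ℂ)
        = (‖S u - S v‖ : ℝ) ^ 2 := by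
      rw [ContinuousLinearMap.mul_apply, adjoint_inner_left, map_sub, inner_self_eq_norm_sq]
    rw [← h1, ← map_sub (adjoint S * S)]
    exact re_inner_le_norm _ _
  -- totally bounded image of the unit ball under S*S
  have hc : IsCompact (closure (⇑(adjoint S * S) '' closedBall (0:H) 1)) :=
    IsCompactOperator.isCompact_closure_image_closedBall (𝕜₁ := ℂ)
      (f := ((adjoint S * S : H →L[ℂ] H) : H →ₗ[ℂ] H)) h 1
  have hIm : TotallyBounded (⇑(adjoint S * S) '' closedBall (0:H) 1) :=
    hc.totallyBounded.subset subset_closure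
  have tb : TotallyBounded (⇑S '' closedBall (0:H) 1) := by
    rw [Metric.totallyBounded_iff]
    intro ε hε
    have hδ : (0:ℝ) < ε ^ 2 / 8 := by positivity
    obtain ⟨t, hts, htf, hcov⟩ :=
      totallyBounded_iff_subset.1 hIm {p : H × H | dist p.1 p.2 < ε ^ 2 / 8}
        (dist_mem_uniformity hδ)
    -- choose preimages
    choose! g hg₁ hg₂ using fun y (hy : y ∈ t) => hts hy
    refine ⟨S '' (g '' t), ((htf.image g).image S), ?_⟩
    rintro - ⟨u, hu, rfl⟩
    obtain ⟨y, hy, hdy⟩ := mem_iUnion₂.1 (hcov (mem_image_of_mem _ hu))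
    refine mem_iUnion₂.2 ⟨S (g y), mem_image_of_mem _ (mem_image_of_mem _ hy), ?_⟩
    have hgy := hg₂ y hy  -- (adjoint S * S) (g y) = y
    have hgball := hg₁ y hy
    have hd : ‖(adjoint S * S) u - (adjoint S * S) (g y)‖ < ε ^ 2 / 8 := by
      rw [hgy, ← dist_eq_norm]; exact hdy
    have hnorm : ‖u - g y‖ ≤ 2 := by
      calc ‖u - g y‖ ≤ ‖u‖ + ‖g y‖ := norm_sub_le _ _
      _ ≤ 1 + 1 := by
          gcongr
          · exact mem_closedBall_zero_iff.1 hu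
          · exact mem_closedBall_zero_iff.1 hgball
      _ = 2 := by norm_num
    have hsq : ‖S u - S (g y)‖ ^ 2 ≤ ε ^ 2 / 4 := by
      calc ‖S u - S (g y)‖ ^ 2
          ≤ ‖(adjoint S * S) u - (adjoint S * S) (g y)‖ * ‖u - g y‖ := key u (g y)
        _ ≤ (ε ^ 2 / 8) * 2 := by
            apply mul_le_mul hd.le hnorm (norm_nonneg _) hδ.le
        _ = ε ^ 2 / 4 := by ring
    have : ‖S u - S (g y)‖ < ε := by
      nlinarith [norm_nonneg (S u - S (g y)), sq_nonneg (‖S u - S (g y)‖ - ε)]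
    rw [mem_ball, dist_eq_norm]
    exact this
  have := TotallyBounded.isCompact_of_isClosed (totallyBounded_closure.2 tb) isClosed_closure
  exact (isCompactOperator_iff_isCompact_closure_image_closedBall (𝕜₁ := ℂ)
    (f := ((S : H →L[ℂ] H) : H →ₗ[ℂ] H)) one_pos).2 this

/-- Let `T = (T₁, T₂)` be a pair of commuting isometries on a Hilbert space
`H` and let `Δ_T = I - T₁T₁* - T₂T₂* + T₁T₂T₂*T₁*` be the defect operator. If `Δ_T` is compact
then the commutator `[T₁*, T₂] = T₁*T₂ - T₂T₁*` is compact. -/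
theorem defect_compact_implies_cross_commutator_compact
    {H : Type*} [NormedAddCommGroup H] [InnerProductSpace ℂ H] [CompleteSpace H]
    (T₁ T₂ : H →L[ℂ] H)
    (h₁ : adjoint T₁ * T₁ = 1) (h₂ : adjoint T₂ * T₂ = 1)
    (hcomm : T₁ * T₂ = T₂ * T₁)
    (hΔ : IsCompactOperator
      ⇑(1 - T₁ * adjoint T₁ - T₂ * adjoint T₂ + T₁ * T₂ * adjoint T₂ * adjoint T₁)) :
    IsCompactOperator ⇑(adjoint T₁ * T₂ - T₂ * adjoint T₁) := by
  set Δ : H →L[ℂ] H :=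
    1 - T₁ * adjoint T₁ - T₂ * adjoint T₂ + T₁ * T₂ * adjoint T₂ * adjoint T₁ with hΔdef
  set A : H →L[ℂ] H := adjoint T₁ * T₂ - T₂ * adjoint T₁ with hA
  have ha : adjoint T₂ * adjoint T₁ = adjoint T₁ * adjoint T₂ := by
    have := congrArg star hcomm
    simpa [star_mul, star_eq_adjoint] using this
  have hadjA : adjoint A = adjoint T₂ * T₁ - T₁ * adjoint T₂ := by
    rw [← star_eq_adjoint]
    simp [hA, star_sub, star_mul, star_eq_adjoint, adjoint_adjoint]
  -- assoc-variants of hypotheses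
  have hT : ∀ x : H →L[ℂ] H, T₁ * (T₂ * x) = T₂ * (T₁ * x) := fun x => by
    rw [← mul_assoc, hcomm, mul_assoc]
  have haa : ∀ x : H →L[ℂ] H, adjoint T₂ * (adjoint T₁ * x) = adjoint T₁ * (adjoint T₂ * x) :=
    fun x => by rw [← mul_assoc, ha, mul_assoc]
  have h₁' : ∀ x : H →L[ℂ] H, adjoint T₁ * (T₁ * x) = x := fun x => by
    rw [← mul_assoc, h₁, one_mul]
  have h₂' : ∀ x : H →L[ℂ] H, adjoint T₂ * (T₂ * x) = x := fun x => by
    rw [← mul_assoc, h₂, one_mul]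
  have key : adjoint A * A = -(adjoint T₂ * Δ * T₂) := by
    rw [hadjA, hA, hΔdef]
    simp only [mul_sub, sub_mul, mul_add, add_mul, mul_one, one_mul, mul_assoc, neg_sub,
      neg_add, neg_neg, hT, haa, h₁', h₂', h₁, h₂]
    abel
  have hRHS : IsCompactOperator ⇑(adjoint T₂ * Δ * T₂) := by
    have : IsCompactOperator (⇑(adjoint T₂) ∘ ⇑Δ ∘ ⇑T₂) := (hΔ.comp_clm T₂).clm_comp (adjoint T₂)
    simpa [Function.comp_def, mul_apply] using this
  have : IsCompactOperator ⇑(adjoint A * A) := by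
    rw [key]
    simpa using hRHS.neg
  exact compact_of_adjoint_mul_self_compact A this
end
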